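/- Let p ∈ (1,2), β ≥ 0, and let (S, 𝒮, m) be a measure space. Let A : S → [0,∞), Y : S → ℝ and U : S → ℝ be measurable. Then (∫_S e^{βA}|U|² dm)^{p/2} ≤ ((2−p)/2)·sup_{s∈S} e^{(p/2)βA(s)}(max(|Y(s)|, |Y(s)+U(s)|))^p + (p/2)·∫_S e^{(p/2)βA}|U|²·(max(|Y|², |Y+U|²))^{(p−2)/2}·1_{{max(|Y|,|Y+U|) ≠ 0}} dm, where the supremum is taken in [0,∞] and the inequality is understood in the extended reals. -/

import Mathlib

open MeasureTheory ENNReal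

/-!
Write `M = max |Y| |Y + U|` and `θ = p / 2`. Where `M > 0`,
`e^{βA} U² = (e^{θβA} M^p)^{(1-θ)/θ} · e^{θβA} U² M^{p-2}`,
and where `M = 0` also `U = 0`.
Bounding the first factor by its supremum `C` gives `∫ e^{βA} U² ≤ C^{(1-θ)/θ} I`, and
raising to the power `θ` and applying weighted AM-GM to `C^{1-θ} I^θ` gives the estimate.
-/

theorem ENNReal.rpow_mul_rpow_le_add {w₁ w₂ : ℝ} (hw₁ : 0 < w₁) (hw₂ : 0 < w₂)
    (hw : w₁ + w₂ = 1) (x y : ℝ≥0∞) :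
    x ^ w₁ * y ^ w₂ ≤ ENNReal.ofReal w₁ * x + ENNReal.ofReal w₂ * y := by
  have key := ENNReal.young_inequality (x ^ w₁) (y ^ w₂) (.inv_inv hw₁ hw₂ hw)
  simpa only [← ENNReal.rpow_mul, mul_inv_cancel₀ hw₁.ne', mul_inv_cancel₀ hw₂.ne',
    ENNReal.rpow_one, ENNReal.ofReal_inv_of_pos hw₁, ENNReal.ofReal_inv_of_pos hw₂,
    div_eq_mul_inv, inv_inv, mul_comm x, mul_comm y] using key

theorem lintegral_rpow_le_of_le_iSup_rpow_mul {S : Type*} [MeasurableSpace S] {m : Measure S}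
    {f g h : S → ℝ≥0∞} {θ : ℝ} (hθ₀ : 0 < θ) (hθ₁ : θ < 1)
    (hfgh : ∀ s, f s ≤ g s ^ ((1 - θ) / θ) * h s) :
    (∫⁻ s, f s ∂m) ^ θ ≤
      ENNReal.ofReal (1 - θ) * (⨆ s, g s) + ENNReal.ofReal θ * ∫⁻ s, h s ∂m := by
  set C := ⨆ s, g s
  have hq : 0 ≤ (1 - θ) / θ := div_nonneg (by linarith) hθ₀.le
  rcases eq_or_ne C ⊤ with hC | hC
  · simp [hC, ENNReal.mul_top, hθ₁]
  have hf : ∫⁻ s, f s ∂m ≤ C ^ ((1 - θ) / θ) * ∫⁻ s, h s ∂m := calc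
    ∫⁻ s, f s ∂m ≤ ∫⁻ s, C ^ ((1 - θ) / θ) * h s ∂m :=
      lintegral_mono fun s => (hfgh s).trans
        (mul_le_mul_left (ENNReal.rpow_le_rpow (le_iSup g s) hq) _)
    _ = C ^ ((1 - θ) / θ) * ∫⁻ s, h s ∂m :=
      lintegral_const_mul' _ _ (ENNReal.rpow_ne_top_of_nonneg hq hC)
  calc (∫⁻ s, f s ∂m) ^ θ ≤ (C ^ ((1 - θ) / θ) * ∫⁻ s, h s ∂m) ^ θ :=
        ENNReal.rpow_le_rpow hf hθ₀.le
    _ = C ^ (1 - θ) * (∫⁻ s, h s ∂m) ^ θ := by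
        rw [ENNReal.mul_rpow_of_nonneg _ _ hθ₀.le, ← ENNReal.rpow_mul,
          div_mul_cancel₀ _ hθ₀.ne']
    _ ≤ _ := ENNReal.rpow_mul_rpow_le_add (by linarith) hθ₀ (by ring) _ _

lemma max_sq_eq_max_abs_sq (a b : ℝ) : max (a ^ 2) (b ^ 2) = max |a| |b| ^ 2 := by
  rcases le_total |a| |b| with h | h
  · rw [max_eq_right h, max_eq_right (sq_le_sq.2 h), sq_abs]
  · rw [max_eq_left h, max_eq_left (sq_le_sq.2 h), sq_abs]

lemma exp_mul_sq_eq_rpow_mul {p : ℝ} (hp : p ≠ 0) (x u : ℝ) {M : ℝ} (hM : 0 < M) :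
    Real.exp x * u ^ 2 = (Real.exp (p / 2 * x) * M ^ p) ^ ((1 - p / 2) / (p / 2)) *
      (Real.exp (p / 2 * x) * u ^ 2 * (M ^ 2) ^ ((p - 2) / 2)) := by
  have hexp : Real.exp (p / 2 * x) ^ ((1 - p / 2) / (p / 2)) = Real.exp ((1 - p / 2) * x) := by
    rw [← Real.exp_mul]; congr 1; field_simp
  have hMp : (M ^ p) ^ ((1 - p / 2) / (p / 2)) = M ^ (2 - p) := by
    rw [← Real.rpow_mul hM.le]; congr 1; field_simp
  have hM2 : (M ^ 2) ^ ((p - 2) / 2) = M ^ (p - 2) := by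
    rw [← Real.rpow_natCast M 2, ← Real.rpow_mul hM.le]; congr 1; push_cast; ring
  rw [Real.mul_rpow (Real.exp_pos _).le (Real.rpow_nonneg hM.le _), hexp, hMp, hM2]
  calc Real.exp x * u ^ 2
      = Real.exp ((1 - p / 2) * x + p / 2 * x) * M ^ (2 - p + (p - 2)) * u ^ 2 := by
        ring_nf; simp
    _ = _ := by rw [Real.exp_add, Real.rpow_add hM]; ring

lemma ofReal_exp_mul_sq_le {p : ℝ} (hp : p ≠ 0) (x y u : ℝ) :
    ENNReal.ofReal (Real.exp x * u ^ 2) ≤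
      ENNReal.ofReal (Real.exp (p / 2 * x) * max |y| |y + u| ^ p) ^ ((1 - p / 2) / (p / 2)) *
        ENNReal.ofReal (Real.exp (p / 2 * x) * u ^ 2 *
          max (y ^ 2) ((y + u) ^ 2) ^ ((p - 2) / 2) * if max |y| |y + u| ≠ 0 then 1 else 0) := by
  by_cases hM : max |y| |y + u| = 0
  · obtain ⟨hy, hyu⟩ := max_le_iff.1 hM.le
    have hu : u = 0 := by linarith [abs_nonpos_iff.1 hy, abs_nonpos_iff.1 hyu]
    simp [hu]
  have hM₀ : 0 < max |y| |y + u| := lt_of_le_of_ne (le_max_of_le_left (abs_nonneg y)) (Ne.symm hM)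
  rw [if_pos hM, mul_one, max_sq_eq_max_abs_sq, exp_mul_sq_eq_rpow_mul hp x u hM₀,
    ENNReal.ofReal_mul (Real.rpow_nonneg (by positivity) _),
    ENNReal.ofReal_rpow_of_pos (by positivity)]

theorem jump_moment_estimate_general (p β : ℝ) (hp1 : 1 < p) (hp2 : p < 2)
    {S : Type*} [MeasurableSpace S] (m : Measure S)
    (A Y U : S → ℝ) :
    (∫⁻ s, ENNReal.ofReal (Real.exp (β * A s) * (U s) ^ 2) ∂m) ^ (p / 2)
      ≤ ENNReal.ofReal ((2 - p) / 2) *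
          (⨆ s, ENNReal.ofReal
            (Real.exp (p / 2 * β * A s) * (max |Y s| |Y s + U s|) ^ p))
        + ENNReal.ofReal (p / 2) *
          ∫⁻ s, ENNReal.ofReal
            (Real.exp (p / 2 * β * A s) * (U s) ^ 2 *
              (max ((Y s) ^ 2) ((Y s + U s) ^ 2)) ^ ((p - 2) / 2) *
              (if max |Y s| |Y s + U s| ≠ 0 then 1 else 0)) ∂m := by
  rw [show (2 - p) / 2 = 1 - p / 2 by ring]
  exact lintegral_rpow_le_of_le_iSup_rpow_mul (by linarith) (by linarith) fun s => by
    simpa only [mul_assoc] using ofReal_exp_mul_sq_le (by linarith) (β * A s) (Y s) (U s)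

/-- Estimate for the `p/2`-th moment of the jump part: for `p ∈ (1,2)`, `β ≥ 0`, a measure
space `(S, 𝒮, m)` and measurable `A : S → [0,∞)`, `Y, U : S → ℝ`,
`(∫_S e^{βA}|U|² dm)^{p/2}
  ≤ ((2−p)/2)·sup_{s∈S} e^{(p/2)βA(s)}(|Y(s)|∨|Y(s)+U(s)|)^p
    + (p/2)·∫_S e^{(p/2)βA}|U|² (|Y|²∨|Y+U|²)^{(p−2)/2} 1_{|Y|∨|Y+U| ≠ 0} dm`,
understood in the extended reals. -/
theorem jump_moment_estimate (p β : ℝ) (hp1 : 1 < p) (hp2 : p < 2) (hβ : 0 ≤ β)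
    {S : Type*} [MeasurableSpace S] (m : Measure S)
    (A Y U : S → ℝ) (hA : Measurable A) (hA0 : ∀ s, 0 ≤ A s)
    (hY : Measurable Y) (hU : Measurable U) :
    (∫⁻ s, ENNReal.ofReal (Real.exp (β * A s) * (U s) ^ 2) ∂m) ^ (p / 2)
      ≤ ENNReal.ofReal ((2 - p) / 2) *
          (⨆ s, ENNReal.ofReal
            (Real.exp (p / 2 * β * A s) * (max |Y s| |Y s + U s|) ^ p))
        + ENNReal.ofReal (p / 2) *
          ∫⁻ s, ENNReal.ofReal
            (Real.exp (p / 2 * β * A s) * (U s) ^ 2 *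
              (max ((Y s) ^ 2) ((Y s + U s) ^ 2)) ^ ((p - 2) / 2) *
              (if max |Y s| |Y s + U s| ≠ 0 then 1 else 0)) ∂m :=
  jump_moment_estimate_general p β hp1 hp2 m A Y U
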